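/- arXiv:2009.07055 — 5 statements merged into one kernel-verified Lean document; each statement's English description precedes it below -/
import Mathlib

section
/- Suppose the unconfoundedness assumption and the overlap assumption hold. Fix d ∈ {0,1,...,J} and β ∈ ℝ, and suppose L(Y*(d) − β) is integrable. Then E[ (D_d / π*_d(X)) · L(Y − β) ] = E[ L(Y*(d) − β) ]. -/
/-!
Let `A = {D = d}` and `q = P(A | X)`, which is `π*_d(X)` almost surely. Unconfoundedness says
`E[1_{B ∩ A} | X] = E[1_B | X] q` for every `B ∈ σ(Y*(d))`; pulling the `σ(X)`-measurable,
bounded weight `1/q` out of the conditional expectation turns this into `∫_B 1_A / q = P(B)`,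
i.e. `E[1_A / q | Y*(d)] = 1`. Pulling the `σ(Y*(d))`-measurable `L(Y*(d) − β)` out of this
conditional expectation gives the identity, since on `A` the observed outcome is `Y*(d)`.
-/

open MeasureTheory ProbabilityTheory Filter

namespace ProbabilityTheory

variable {Ω : Type*} {m m₁ mΩ : MeasurableSpace Ω} {μ : Measure Ω}
  {A : Set Ω} {c : ℝ}

lemma ae_norm_inv_le_inv (hc : 0 < c) {f : Ω → ℝ} (hf : ∀ᵐ ω ∂μ, c ≤ f ω) :
    ∀ᵐ ω ∂μ, ‖(f ω)⁻¹‖ ≤ c⁻¹ := by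
  filter_upwards [hf] with ω hω
  rw [norm_inv, Real.norm_of_nonneg (hc.trans_le hω).le]
  exact inv_anti₀ hc hω

lemma integrable_indicator_inv_condExp [IsFiniteMeasure μ] (hA : MeasurableSet A) (hc : 0 < c)
    (hq : ∀ᵐ ω ∂μ, c ≤ (μ⟦A | m⟧) ω) :
    Integrable (A.indicator fun ω => ((μ⟦A | m⟧) ω)⁻¹) μ := by
  refine (Integrable.of_bound (C := c⁻¹) ?_ ?_).indicator hA
  · exact integrable_condExp.aemeasurable.inv.aestronglyMeasurable
  · exact ae_norm_inv_le_inv hc hq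

lemma setIntegral_indicator_inv_condExp [IsFiniteMeasure μ] (hm : m ≤ mΩ)
    (hA : MeasurableSet A) {B : Set Ω} (hB : MeasurableSet B) (hc : 0 < c)
    (hq : ∀ᵐ ω ∂μ, c ≤ (μ⟦A | m⟧) ω)
    (hBA : μ⟦B ∩ A | m⟧ =ᵐ[μ] μ⟦B | m⟧ * μ⟦A | m⟧) :
    ∫ ω in B, A.indicator (fun ω => ((μ⟦A | m⟧) ω)⁻¹) ω ∂μ = μ.real B := by
  set q := μ⟦A | m⟧
  have hw : StronglyMeasurable[m] fun ω => (q ω)⁻¹ :=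
    (stronglyMeasurable_condExp.measurable.inv).stronglyMeasurable
  have hBA_int : Integrable ((B ∩ A).indicator fun _ => (1 : ℝ)) μ :=
    (integrable_const 1).indicator (hB.inter hA)
  calc ∫ ω in B, A.indicator (fun ω => (q ω)⁻¹) ω ∂μ
      = ∫ ω, ((fun ω => (q ω)⁻¹) * (B ∩ A).indicator fun _ => (1 : ℝ)) ω ∂μ := by
        rw [← integral_indicator hB]
        congr 1 with ω
        by_cases hωB : ω ∈ B <;> by_cases hωA : ω ∈ A <;> simp [hωA, hωB]
    _ = ∫ ω, (q ω)⁻¹ * (μ⟦B ∩ A | m⟧) ω ∂μ := by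
        rw [← integral_condExp hm]
        exact integral_congr_ae
          (condExp_stronglyMeasurable_mul_of_bound hm hw hBA_int _ (ae_norm_inv_le_inv hc hq))
    _ = ∫ ω, (μ⟦B | m⟧) ω ∂μ := by
        refine integral_congr_ae ?_
        filter_upwards [hBA, hq] with ω hω hqω
        rw [hω, Pi.mul_apply, mul_comm, mul_assoc, mul_inv_cancel₀ (hc.trans_le hqω).ne', mul_one]
    _ = μ.real B := by
        rw [integral_condExp hm, integral_indicator hB, setIntegral_const, smul_eq_mul, mul_one]

lemma condExp_indicator_inv_condExp_eq_one [IsFiniteMeasure μ] (hm : m ≤ mΩ) (hm₁ : m₁ ≤ mΩ)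
    (hA : MeasurableSet A) (hc : 0 < c) (hq : ∀ᵐ ω ∂μ, c ≤ (μ⟦A | m⟧) ω)
    (hindep : ∀ B, MeasurableSet[m₁] B → μ⟦B ∩ A | m⟧ =ᵐ[μ] μ⟦B | m⟧ * μ⟦A | m⟧) :
    μ[A.indicator (fun ω => ((μ⟦A | m⟧) ω)⁻¹) | m₁] =ᵐ[μ] 1 := by
  refine (ae_eq_condExp_of_forall_setIntegral_eq (g := fun _ => 1) hm₁
    (integrable_indicator_inv_condExp hA hc hq) (fun _ _ _ => integrableOn_const) ?_
    aestronglyMeasurable_const).symm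
  intro B hB _
  rw [setIntegral_indicator_inv_condExp hm hA (hm₁ B hB) hc hq (hindep B hB)]
  simp

lemma integral_indicator_inv_condExp_mul [IsFiniteMeasure μ] (hm : m ≤ mΩ) (hm₁ : m₁ ≤ mΩ)
    (hA : MeasurableSet A) (hc : 0 < c) (hq : ∀ᵐ ω ∂μ, c ≤ (μ⟦A | m⟧) ω)
    (hindep : ∀ B, MeasurableSet[m₁] B → μ⟦B ∩ A | m⟧ =ᵐ[μ] μ⟦B | m⟧ * μ⟦A | m⟧)
    {f : Ω → ℝ} (hfm : StronglyMeasurable[m₁] f) (hf : Integrable f μ) :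
    ∫ ω, A.indicator (fun ω => ((μ⟦A | m⟧) ω)⁻¹) ω * f ω ∂μ = ∫ ω, f ω ∂μ := by
  set w := A.indicator fun ω => ((μ⟦A | m⟧) ω)⁻¹
  have hw : Integrable w μ := integrable_indicator_inv_condExp hA hc hq
  have hwf : Integrable (w * f) μ :=
    hf.bdd_mul hw.aestronglyMeasurable
      ((ae_norm_inv_le_inv hc hq).mono fun ω h => (norm_indicator_le_norm_self _ ω).trans h)
  calc ∫ ω, w ω * f ω ∂μ = ∫ ω, (μ[w * f | m₁]) ω ∂μ := (integral_condExp hm₁).symm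
    _ = ∫ ω, f ω ∂μ := by
        refine integral_congr_ae ?_
        filter_upwards [condExp_mul_of_stronglyMeasurable_right hfm hwf hw,
          condExp_indicator_inv_condExp_eq_one hm hm₁ hA hc hq hindep] with ω hω hω'
        rw [hω, Pi.mul_apply, hω', Pi.one_apply, one_mul]

end ProbabilityTheory

theorem ipw_identity_general
    {Ω : Type*} [MeasurableSpace Ω] [StandardBorelSpace Ω] [Nonempty Ω]
    (μ : Measure Ω) [IsProbabilityMeasure μ]
    {J : ℕ} (D : Ω → Fin (J + 1)) (hD : Measurable D)
    {p : ℕ} (X : Ω → (Fin p → ℝ)) (hX : Measurable X)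
    (Ystar : Fin (J + 1) → Ω → ℝ) (hY : ∀ d, Measurable (Ystar d))
    -- unconfoundedness: `Y*(d) ⟂ D | σ(X)` for every treatment level `d`
    (hUnconf : ∀ d : Fin (J + 1),
      CondIndepFun (MeasurableSpace.comap X inferInstance) hX.comap_le (Ystar d) D μ)
    -- the propensity scores `π*_d(X)`, as `σ(X)`-measurable versions of `P(D = d | X)`
    (π : Fin (J + 1) → Ω → ℝ)
    (hπ : ∀ d : Fin (J + 1), π d =ᵐ[μ]
      μ[(fun ω => if D ω = d then (1 : ℝ) else 0) | MeasurableSpace.comap X inferInstance])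
    -- overlap
    (c cbar : ℝ) (hc : 0 < c)
    (hOverlap : ∀ d : Fin (J + 1), ∀ᵐ ω ∂μ, π d ω ∈ Set.Icc c cbar)
    -- convex loss
    (L : ℝ → ℝ) (hL : ConvexOn ℝ Set.univ L)
    (d : Fin (J + 1)) (β : ℝ)
    (hint : Integrable (fun ω => L (Ystar d ω - β)) μ) :
    ∫ ω, (if D ω = d then (1 : ℝ) else 0) / π d ω * L (Ystar (D ω) ω - β) ∂μ
      = ∫ ω, L (Ystar d ω - β) ∂μ := by
  set A := D ⁻¹' {d}
  -- proved before `mX` and `mY` enter the context as local instances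
  have hA : MeasurableSet A := hD (measurableSet_singleton d)
  set mX : MeasurableSpace Ω := MeasurableSpace.comap X inferInstance
  set mY : MeasurableSpace Ω := MeasurableSpace.comap (Ystar d) inferInstance
  have hπA : π d =ᵐ[μ] μ⟦A | mX⟧ := by
    convert hπ d using 2
    ext ω; by_cases hω : D ω = d <;> simp [A, hω]
  have hq : ∀ᵐ ω ∂μ, c ≤ (μ⟦A | mX⟧) ω := by
    filter_upwards [hOverlap d, hπA] with ω hω hωA
    exact hωA ▸ hω.1
  have hindep : ∀ B, MeasurableSet[mY] B → μ⟦B ∩ A | mX⟧ =ᵐ[μ] μ⟦B | mX⟧ * μ⟦A | mX⟧ := by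
    rintro _ ⟨s, hs, rfl⟩
    exact (condIndepFun_iff_condExp_inter_preimage_eq_mul (hY d) hD).mp (hUnconf d) s {d} hs
      (measurableSet_singleton d)
  have hLm : Measurable L := (continuousOn_univ.mp (hL.continuousOn isOpen_univ)).measurable
  have hfm : StronglyMeasurable[mY] fun ω => L (Ystar d ω - β) :=
    ((hLm.comp (measurable_id.sub_const β)).comp (comap_measurable (Ystar d))).stronglyMeasurable
  rw [← integral_indicator_inv_condExp_mul hX.comap_le (hY d).comap_le hA hc hq hindep hfm hint]
  refine integral_congr_ae ?_
  filter_upwards [hπA] with ω hω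
  by_cases hωA : D ω = d <;> simp [A, mX, hωA, hω, div_eq_inv_mul]

/-- Under unconfoundedness and overlap, for a fixed treatment level `d`
and fixed `β`, the inverse-probability-weighted expectation of the loss equals the
expectation of the loss of the potential outcome:
`E[ (D_d / π*_d(X)) · L(Y − β) ] = E[ L(Y*(d) − β) ]`. -/
theorem ipw_identity
    {Ω : Type*} [MeasurableSpace Ω] [StandardBorelSpace Ω] [Nonempty Ω]
    (μ : Measure Ω) [IsProbabilityMeasure μ]
    {J : ℕ} (D : Ω → Fin (J + 1)) (hD : Measurable D)
    {p : ℕ} (X : Ω → (Fin p → ℝ)) (hX : Measurable X)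
    (Ystar : Fin (J + 1) → Ω → ℝ) (hY : ∀ d, Measurable (Ystar d))
    -- unconfoundedness: `Y*(d) ⟂ D | σ(X)` for every treatment level `d`
    (hUnconf : ∀ d : Fin (J + 1),
      CondIndepFun (MeasurableSpace.comap X inferInstance) hX.comap_le (Ystar d) D μ)
    -- the propensity scores `π*_d(X)`, as `σ(X)`-measurable versions of `P(D = d | X)`
    (π : Fin (J + 1) → Ω → ℝ)
    (hπmeas : ∀ d, Measurable[MeasurableSpace.comap X inferInstance] (π d))
    (hπ : ∀ d : Fin (J + 1), π d =ᵐ[μ]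
      μ[(fun ω => if D ω = d then (1 : ℝ) else 0) | MeasurableSpace.comap X inferInstance])
    -- overlap
    (c cbar : ℝ) (hc : 0 < c) (hcbar : cbar < 1)
    (hOverlap : ∀ d : Fin (J + 1), ∀ᵐ ω ∂μ, π d ω ∈ Set.Icc c cbar)
    -- convex loss
    (L : ℝ → ℝ) (hL : ConvexOn ℝ Set.univ L)
    (d : Fin (J + 1)) (β : ℝ)
    (hint : Integrable (fun ω => L (Ystar d ω - β)) μ) :
    ∫ ω, (if D ω = d then (1 : ℝ) else 0) / π d ω * L (Ystar (D ω) ω - β) ∂μ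
      = ∫ ω, L (Ystar d ω - β) ∂μ :=
  ipw_identity_general μ D hD X hX Ystar hY hUnconf π hπ c cbar hc hOverlap L hL d β hint
end

section
/- Suppose the unconfoundedness assumption and the overlap assumption hold, and suppose L(Y*(d) − β) is integrable for every β in a compact set Θ_d ⊂ ℝ and every d ∈ {0,1,...,J}. Then β* = (β*_0,...,β*_J) minimizes Σ_{d=0}^{J} E[L(Y*(d) − β_d)] over (β_0,...,β_J) ∈ Θ_0 × ⋯ × Θ_J if and only if β* minimizes the inverse-probability-weighted objective Σ_{d=0}^{J} E[ (D_d / π*_d(X)) · L(Y − β_d) ] over the same set; in fact the two objective functions are identical on Θ_0 × ⋯ × Θ_J. -/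
/-!
The weight `w = 1{D = d} / π_d(X)` turns `μ` into a measure under which `Y*(d)` keeps its law:
for a measurable set `t`, conditioning on `X` and unconfoundedness give
`E[w 1{Y*(d) ∈ t}] = E[π_d(X)⁻¹ P(D = d | X) P(Y*(d) ∈ t | X)] = P(Y*(d) ∈ t)`.
Hence `E[w φ(Y*(d))] = E[φ(Y*(d))]` for every measurable `φ`, both sides being integrals of `φ`
against the same law, and on `{D = d}` the observed outcome is `Y*(d)`.
With `φ = L(· - β_d)` the two objectives agree term by term, so they have the same minimizers.
-/

open MeasureTheory ProbabilityTheory Filter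

section Reweighting

variable {Ω β : Type*} {mΩ : MeasurableSpace Ω} {mβ : MeasurableSpace β} {μ : Measure Ω}
  [IsFiniteMeasure μ] {Y : Ω → β} {w : Ω → ℝ}

theorem map_withDensity_ofReal_eq_map (hY : Measurable Y) (hwi : Integrable w μ)
    (hw0 : 0 ≤ᵐ[μ] w) (hw : ∀ t, MeasurableSet t → ∫ ω in Y ⁻¹' t, w ω ∂μ = μ.real (Y ⁻¹' t)) :
    (μ.withDensity fun ω => ENNReal.ofReal (w ω)).map Y = μ.map Y := by
  ext t ht
  rw [Measure.map_apply hY ht, Measure.map_apply hY ht, withDensity_apply _ (hY ht),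
    ← ofReal_integral_eq_lintegral_ofReal hwi.integrableOn (ae_restrict_of_ae hw0), hw t ht,
    ofReal_measureReal]

theorem integral_mul_comp_eq_integral_comp (hY : Measurable Y) (hwm : Measurable w)
    (hwi : Integrable w μ) (hw0 : 0 ≤ᵐ[μ] w)
    (hw : ∀ t, MeasurableSet t → ∫ ω in Y ⁻¹' t, w ω ∂μ = μ.real (Y ⁻¹' t))
    {φ : β → ℝ} (hφ : Measurable φ) :
    ∫ ω, w ω * φ (Y ω) ∂μ = ∫ ω, φ (Y ω) ∂μ := by
  calc ∫ ω, w ω * φ (Y ω) ∂μ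
      = ∫ ω, φ (Y ω) ∂μ.withDensity fun ω => ENNReal.ofReal (w ω) := by
        rw [integral_withDensity_eq_integral_toReal_smul hwm.ennreal_ofReal
          (ae_of_all _ fun _ => ENNReal.ofReal_lt_top)]
        refine integral_congr_ae ?_
        filter_upwards [hw0] with ω hω
        simp [ENNReal.toReal_ofReal hω]
    _ = ∫ y, φ y ∂(μ.withDensity fun ω => ENNReal.ofReal (w ω)).map Y :=
        (integral_map hY.aemeasurable hφ.aestronglyMeasurable).symm
    _ = ∫ ω, φ (Y ω) ∂μ := by
        rw [map_withDensity_ofReal_eq_map hY hwi hw0 hw,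
          integral_map hY.aemeasurable hφ.aestronglyMeasurable]

end Reweighting

theorem integral_mul_condExp_of_bound {Ω : Type*} {m mΩ : MeasurableSpace Ω} {μ : Measure Ω}
    [IsFiniteMeasure μ] (hm : m ≤ mΩ) {q f : Ω → ℝ} (hq : StronglyMeasurable[m] q)
    (hf : Integrable f μ) (C : ℝ) (hqC : ∀ᵐ ω ∂μ, ‖q ω‖ ≤ C) :
    ∫ ω, q ω * f ω ∂μ = ∫ ω, q ω * (μ[f | m]) ω ∂μ := by
  rw [← integral_condExp hm]
  exact integral_congr_ae (condExp_stronglyMeasurable_mul_of_bound hm hq hf C hqC)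

section InversePropensityWeighting

variable {Ω β γ : Type*} {m mΩ : MeasurableSpace Ω} [StandardBorelSpace Ω]
  {mβ : MeasurableSpace β} {mγ : MeasurableSpace γ} {μ : Measure Ω} [IsFiniteMeasure μ]
  {Y : Ω → β} {D : Ω → γ} {s : Set γ} {π : Ω → ℝ} {c : ℝ}

theorem setIntegral_preimage_indicator_div_eq_measureReal (hm : m ≤ mΩ) (hY : Measurable Y)
    (hD : Measurable D) (hYD : CondIndepFun m hm Y D μ) (hs : MeasurableSet s)
    (hπm : Measurable[m] π) (hπ : π =ᵐ[μ] μ⟦D ⁻¹' s | m⟧) (hc : 0 < c)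
    (hπc : ∀ᵐ ω ∂μ, c ≤ π ω) {t : Set β} (ht : MeasurableSet t) :
    ∫ ω in Y ⁻¹' t, (D ⁻¹' s).indicator (fun _ => 1) ω / π ω ∂μ = μ.real (Y ⁻¹' t) := by
  have hπinv : ∀ᵐ ω ∂μ, ‖(π ω)⁻¹‖ ≤ c⁻¹ := by
    filter_upwards [hπc] with ω hω
    rw [norm_inv, Real.norm_of_nonneg (hc.le.trans hω)]
    exact inv_anti₀ hc hω
  calc ∫ ω in Y ⁻¹' t, (D ⁻¹' s).indicator (fun _ => 1) ω / π ω ∂μ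
      = ∫ ω, (π ω)⁻¹ * (Y ⁻¹' t ∩ D ⁻¹' s).indicator (fun _ => 1) ω ∂μ := by
        rw [← integral_indicator (hY ht)]
        congr 1 with ω
        by_cases hYω : ω ∈ Y ⁻¹' t <;> by_cases hDω : ω ∈ D ⁻¹' s <;>
          simp [hYω, hDω, div_eq_inv_mul]
    _ = ∫ ω, (π ω)⁻¹ * (μ⟦Y ⁻¹' t ∩ D ⁻¹' s | m⟧) ω ∂μ :=
        integral_mul_condExp_of_bound hm hπm.inv.stronglyMeasurable
          ((integrable_indicator_iff ((hY ht).inter (hD hs))).2 integrableOn_const) _ hπinv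
    _ = ∫ ω, (μ⟦Y ⁻¹' t | m⟧) ω ∂μ := by
        refine integral_congr_ae ?_
        filter_upwards [(condIndepFun_iff_condExp_inter_preimage_eq_mul hY hD).1 hYD t s ht hs,
          hπ, hπc] with ω hprod hπω hcω
        rw [hprod, ← hπω, mul_comm, mul_assoc, mul_inv_cancel₀ (hc.trans_le hcω).ne', mul_one]
    _ = μ.real (Y ⁻¹' t) := by
        rw [integral_condExp hm]
        exact integral_indicator_one (hY ht)

theorem integral_indicator_div_mul_comp_eq_integral_comp (hm : m ≤ mΩ) (hY : Measurable Y)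
    (hD : Measurable D) (hYD : CondIndepFun m hm Y D μ) (hs : MeasurableSet s)
    (hπm : Measurable[m] π) (hπ : π =ᵐ[μ] μ⟦D ⁻¹' s | m⟧) (hc : 0 < c)
    (hπc : ∀ᵐ ω ∂μ, c ≤ π ω) {φ : β → ℝ} (hφ : Measurable φ) :
    ∫ ω, (D ⁻¹' s).indicator (fun _ => 1) ω / π ω * φ (Y ω) ∂μ = ∫ ω, φ (Y ω) ∂μ := by
  have hw0 : 0 ≤ᵐ[μ] fun ω => (D ⁻¹' s).indicator (fun _ => (1 : ℝ)) ω / π ω := by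
    filter_upwards [hπc] with ω hω
    exact div_nonneg (Set.indicator_nonneg (fun _ _ => zero_le_one) ω) (hc.le.trans hω)
  have hwc : ∀ᵐ ω ∂μ, ‖(D ⁻¹' s).indicator (fun _ => (1 : ℝ)) ω / π ω‖ ≤ c⁻¹ := by
    filter_upwards [hπc, hw0] with ω hω hω0
    rw [Real.norm_of_nonneg hω0, div_eq_inv_mul]
    calc (π ω)⁻¹ * (D ⁻¹' s).indicator (fun _ => 1) ω
        ≤ (π ω)⁻¹ * 1 := by
          gcongr
          · exact inv_nonneg.2 (hc.le.trans hω)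
          · exact Set.indicator_apply_le' (fun _ => le_rfl) (fun _ => zero_le_one)
      _ ≤ c⁻¹ := by rw [mul_one]; exact inv_anti₀ hc hω
  have hwm : Measurable fun ω => (D ⁻¹' s).indicator (fun _ => (1 : ℝ)) ω / π ω :=
    (measurable_const.indicator (hD hs)).div (hπm.mono hm le_rfl)
  exact integral_mul_comp_eq_integral_comp hY hwm
    ((integrable_const c⁻¹).mono' hwm.aestronglyMeasurable hwc) hw0
    (fun t ht => setIntegral_preimage_indicator_div_eq_measureReal hm hY hD hYD hs hπm hπ hc hπc ht)
    hφ

end InversePropensityWeighting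

theorem ipw_objective_identity_general
    {Ω : Type*} [MeasurableSpace Ω] [StandardBorelSpace Ω] [Nonempty Ω]
    (μ : Measure Ω) [IsProbabilityMeasure μ]
    {J : ℕ} (D : Ω → Fin (J + 1)) (hD : Measurable D)
    {p : ℕ} (X : Ω → (Fin p → ℝ)) (hX : Measurable X)
    (Ystar : Fin (J + 1) → Ω → ℝ) (hY : ∀ d, Measurable (Ystar d))
    -- unconfoundedness
    (hUnconf : ∀ d : Fin (J + 1),
      CondIndepFun (MeasurableSpace.comap X inferInstance) hX.comap_le (Ystar d) D μ)
    -- propensity scores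
    (π : Fin (J + 1) → Ω → ℝ)
    (hπmeas : ∀ d, Measurable[MeasurableSpace.comap X inferInstance] (π d))
    (hπ : ∀ d : Fin (J + 1), π d =ᵐ[μ]
      μ[(fun ω => if D ω = d then (1 : ℝ) else 0) | MeasurableSpace.comap X inferInstance])
    -- overlap
    (c cbar : ℝ) (hc : 0 < c)
    (hOverlap : ∀ d : Fin (J + 1), ∀ᵐ ω ∂μ, π d ω ∈ Set.Icc c cbar)
    -- convex loss
    (L : ℝ → ℝ) (hL : ConvexOn ℝ Set.univ L)
    -- compact parameter sets and integrability over them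
    (Θ : Fin (J + 1) → Set ℝ)
    (βstar : Fin (J + 1) → ℝ) :
    (∀ b : Fin (J + 1) → ℝ, (∀ d, b d ∈ Θ d) →
        ∑ d : Fin (J + 1), ∫ ω, L (Ystar d ω - b d) ∂μ
          = ∑ d : Fin (J + 1),
              ∫ ω, (if D ω = d then (1 : ℝ) else 0) / π d ω * L (Ystar (D ω) ω - b d) ∂μ) ∧
    ((∀ b : Fin (J + 1) → ℝ, (∀ d, b d ∈ Θ d) →
        ∑ d : Fin (J + 1), ∫ ω, L (Ystar d ω - βstar d) ∂μ
          ≤ ∑ d : Fin (J + 1), ∫ ω, L (Ystar d ω - b d) ∂μ)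
      ↔ (∀ b : Fin (J + 1) → ℝ, (∀ d, b d ∈ Θ d) →
        ∑ d : Fin (J + 1),
            ∫ ω, (if D ω = d then (1 : ℝ) else 0) / π d ω * L (Ystar (D ω) ω - βstar d) ∂μ
          ≤ ∑ d : Fin (J + 1),
            ∫ ω, (if D ω = d then (1 : ℝ) else 0) / π d ω * L (Ystar (D ω) ω - b d) ∂μ)) := by
  have hLm : Measurable L := (continuousOn_univ.1 (hL.continuousOn isOpen_univ)).measurable
  have hindicator (d : Fin (J + 1)) :
      (fun ω => if D ω = d then (1 : ℝ) else 0) = (D ⁻¹' {d}).indicator fun _ => 1 := by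
    ext ω
    by_cases h : D ω = d <;> simp [h]
  have hipw (d : Fin (J + 1)) (β : ℝ) :
      ∫ ω, (if D ω = d then (1 : ℝ) else 0) / π d ω * L (Ystar (D ω) ω - β) ∂μ
        = ∫ ω, L (Ystar d ω - β) ∂μ := by
    have hD_eq : (fun ω => (if D ω = d then (1 : ℝ) else 0) / π d ω * L (Ystar (D ω) ω - β))
        = fun ω => (D ⁻¹' {d}).indicator (fun _ => 1) ω / π d ω * L (Ystar d ω - β) := by
      ext ω
      by_cases h : D ω = d <;> simp [h]
    rw [hD_eq]
    exact integral_indicator_div_mul_comp_eq_integral_comp hX.comap_le (hY d) hD (hUnconf d)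
      (measurableSet_singleton d) (hπmeas d) (hindicator d ▸ hπ d) hc
      ((hOverlap d).mono fun _ h => h.1) (hLm.comp (measurable_id.sub_const β))
  have hobjective (b : Fin (J + 1) → ℝ) :
      ∑ d, ∫ ω, L (Ystar d ω - b d) ∂μ
        = ∑ d, ∫ ω, (if D ω = d then (1 : ℝ) else 0) / π d ω * L (Ystar (D ω) ω - b d) ∂μ :=
    Finset.sum_congr rfl fun d _ => (hipw d (b d)).symm
  exact ⟨fun b _ => hobjective b, by simp only [hobjective]⟩

/-- Under unconfoundedness and overlap, with `L(Y*(d) − β)` integrable for all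
`β` in compact sets `Θ_d`, the population objective `Σ_d E[L(Y*(d) − β_d)]` and the
inverse-probability-weighted objective `Σ_d E[(D_d/π*_d(X)) L(Y − β_d)]` are identical on
`Θ_0 × ⋯ × Θ_J`; in particular `β*` minimizes the former iff it minimizes the latter. -/
theorem ipw_objective_identity
    {Ω : Type*} [MeasurableSpace Ω] [StandardBorelSpace Ω] [Nonempty Ω]
    (μ : Measure Ω) [IsProbabilityMeasure μ]
    {J : ℕ} (D : Ω → Fin (J + 1)) (hD : Measurable D)
    {p : ℕ} (X : Ω → (Fin p → ℝ)) (hX : Measurable X)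
    (Ystar : Fin (J + 1) → Ω → ℝ) (hY : ∀ d, Measurable (Ystar d))
    -- unconfoundedness
    (hUnconf : ∀ d : Fin (J + 1),
      CondIndepFun (MeasurableSpace.comap X inferInstance) hX.comap_le (Ystar d) D μ)
    -- propensity scores
    (π : Fin (J + 1) → Ω → ℝ)
    (hπmeas : ∀ d, Measurable[MeasurableSpace.comap X inferInstance] (π d))
    (hπ : ∀ d : Fin (J + 1), π d =ᵐ[μ]
      μ[(fun ω => if D ω = d then (1 : ℝ) else 0) | MeasurableSpace.comap X inferInstance])
    -- overlap
    (c cbar : ℝ) (hc : 0 < c) (hcbar : cbar < 1)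
    (hOverlap : ∀ d : Fin (J + 1), ∀ᵐ ω ∂μ, π d ω ∈ Set.Icc c cbar)
    -- convex loss
    (L : ℝ → ℝ) (hL : ConvexOn ℝ Set.univ L)
    -- compact parameter sets and integrability over them
    (Θ : Fin (J + 1) → Set ℝ) (hΘ : ∀ d, IsCompact (Θ d))
    (hint : ∀ d : Fin (J + 1), ∀ β ∈ Θ d, Integrable (fun ω => L (Ystar d ω - β)) μ)
    (βstar : Fin (J + 1) → ℝ) (hβstar : ∀ d, βstar d ∈ Θ d) :
    (∀ b : Fin (J + 1) → ℝ, (∀ d, b d ∈ Θ d) →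
        ∑ d : Fin (J + 1), ∫ ω, L (Ystar d ω - b d) ∂μ
          = ∑ d : Fin (J + 1),
              ∫ ω, (if D ω = d then (1 : ℝ) else 0) / π d ω * L (Ystar (D ω) ω - b d) ∂μ) ∧
    ((∀ b : Fin (J + 1) → ℝ, (∀ d, b d ∈ Θ d) →
        ∑ d : Fin (J + 1), ∫ ω, L (Ystar d ω - βstar d) ∂μ
          ≤ ∑ d : Fin (J + 1), ∫ ω, L (Ystar d ω - b d) ∂μ)
      ↔ (∀ b : Fin (J + 1) → ℝ, (∀ d, b d ∈ Θ d) →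
        ∑ d : Fin (J + 1),
            ∫ ω, (if D ω = d then (1 : ℝ) else 0) / π d ω * L (Ystar (D ω) ω - βstar d) ∂μ
          ≤ ∑ d : Fin (J + 1),
            ∫ ω, (if D ω = d then (1 : ℝ) else 0) / π d ω * L (Ystar (D ω) ω - b d) ∂μ)) :=
  ipw_objective_identity_general μ D hD X hX Ystar hY hUnconf π hπmeas hπ c cbar hc hOverlap L hL Θ
    βstar
end

section
/- Suppose the unconfoundedness assumption and the overlap assumption hold, Y is integrable, and let g*_d(X) be a σ(X)-measurable random variable satisfying g*_d(X) · π*_d(X) = E[ D_d · Y | σ(X) ] almost surely (i.e., g*_d(x) = E[Y | X = x, D = d] is the outcome regression function). Then E[ Y*(d) ] = E[ g*_d(X) ] for every d ∈ {0,1,...,J}. -/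
/-!
Write `B = {D = d}` and `π = P(B | X)`. Conditional independence of `Y*(d)` and `D` given `X`
says that on the σ-algebra generated by `X` and `Y*(d)` the measure `μ` restricted to `B` has
density `π` with respect to `μ`; it suffices to check this on the π-system of sets
`A ∩ {Y*(d) ∈ s}` with `A ∈ σ(X)`. Integrating `|Y*(d)|` against both measures and using
`π ≥ c` shows that `Y*(d)` is integrable, since `Y = Y*(d)` on `B`. Integrating `1_A Y*(d)`
gives `E[1_B Y*(d) | X] = π E[Y*(d) | X]`, so `g*_d(X) = E[Y*(d) | X]` wherever `π > 0`, and
the tower property finishes the proof.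
-/

open MeasureTheory ProbabilityTheory Set
open scoped ENNReal

namespace MeasurableSpace

variable {Ω : Type*}

theorem isPiSystem_image2_inter {S T : Set (Set Ω)} (hS : IsPiSystem S) (hT : IsPiSystem T) :
    IsPiSystem (image2 (· ∩ ·) S T) := by
  rintro - ⟨s₁, hs₁, t₁, ht₁, rfl⟩ - ⟨s₂, hs₂, t₂, ht₂, rfl⟩ hne
  refine ⟨s₁ ∩ s₂, hS s₁ hs₁ s₂ hs₂ (hne.mono ?_), t₁ ∩ t₂, hT t₁ ht₁ t₂ ht₂ (hne.mono ?_), ?_⟩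
  · exact fun x hx => ⟨hx.1.1, hx.2.1⟩
  · exact fun x hx => ⟨hx.1.2, hx.2.2⟩
  · ext; simp only [mem_inter_iff]; tauto

theorem sup_eq_generateFrom_image2_inter (m₁ m₂ : MeasurableSpace Ω) :
    m₁ ⊔ m₂ =
      generateFrom (image2 (· ∩ ·) {s | MeasurableSet[m₁] s} {t | MeasurableSet[m₂] t}) := by
  refine le_antisymm (sup_le (fun s hs => ?_) (fun t ht => ?_)) (generateFrom_le ?_)
  · exact measurableSet_generateFrom ⟨s, hs, univ, MeasurableSet.univ, inter_univ s⟩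
  · exact measurableSet_generateFrom ⟨univ, MeasurableSet.univ, t, ht, univ_inter t⟩
  · rintro - ⟨s, hs, t, ht, rfl⟩
    exact (le_sup_left (b := m₂) s hs).inter (le_sup_right (a := m₁) t ht)

end MeasurableSpace

theorem MeasureTheory.condExp_indicator_one_nonneg {Ω : Type*} {m mΩ : MeasurableSpace Ω}
    {μ : Measure Ω} (s : Set Ω) : 0 ≤ᵐ[μ] μ⟦s | m⟧ :=
  condExp_nonneg (ae_of_all _ (indicator_nonneg fun _ _ => zero_le_one))

namespace ProbabilityTheory.CondIndepFun

variable {Ω β γ : Type*} {m mΩ : MeasurableSpace Ω} [StandardBorelSpace Ω] {hm : m ≤ mΩ}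
  {μ : Measure Ω} [IsFiniteMeasure μ] {mβ : MeasurableSpace β} {mγ : MeasurableSpace γ}
  {f : Ω → β} {g : Ω → γ} {t : Set γ}

theorem measureReal_inter_preimage_inter (hfg : CondIndepFun m hm f g μ) (hf : Measurable f)
    (hg : Measurable g) (ht : MeasurableSet t) {A : Set Ω} (hA : MeasurableSet[m] A) {s : Set β}
    (hs : MeasurableSet s) :
    μ.real (A ∩ f ⁻¹' s ∩ g ⁻¹' t) = ∫ ω in A ∩ f ⁻¹' s, (μ⟦g ⁻¹' t | m⟧) ω ∂μ := by
  have hE : MeasurableSet (f ⁻¹' s) := hf hs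
  have hEG : MeasurableSet (f ⁻¹' s ∩ g ⁻¹' t) := hE.inter (hg ht)
  have h1E : Integrable ((f ⁻¹' s).indicator fun _ => (1 : ℝ)) μ :=
    (integrable_const 1).indicator hE
  have h1EG : Integrable ((f ⁻¹' s ∩ g ⁻¹' t).indicator fun _ => (1 : ℝ)) μ :=
    (integrable_const 1).indicator hEG
  have hprod : Integrable (μ⟦g ⁻¹' t | m⟧ * (f ⁻¹' s).indicator fun _ => (1 : ℝ)) μ :=
    integrable_condExp.mul_bdd h1E.aestronglyMeasurable (c := 1) (ae_of_all _ fun ω => by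
      by_cases h : ω ∈ f ⁻¹' s <;> simp [h])
  have hindep := (condIndepFun_iff_condExp_inter_preimage_eq_mul hf hg).1 hfg s t hs ht
  have hpull := condExp_mul_of_stronglyMeasurable_left (m := m) stronglyMeasurable_condExp hprod h1E
  calc μ.real (A ∩ f ⁻¹' s ∩ g ⁻¹' t)
      = ∫ ω in A, (f ⁻¹' s ∩ g ⁻¹' t).indicator (fun _ => (1 : ℝ)) ω ∂μ := by
        rw [← Pi.one_def, integral_indicator_one hEG, measureReal_restrict_apply hEG,
          inter_comm _ A, ← inter_assoc]
    _ = ∫ ω in A, (μ⟦g ⁻¹' t | m⟧ * μ⟦f ⁻¹' s | m⟧) ω ∂μ := by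
        rw [← setIntegral_condExp hm h1EG hA]
        refine setIntegral_congr_ae (hm A hA) ?_
        filter_upwards [hindep] with ω hω _
        rw [hω, Pi.mul_apply, mul_comm]
    _ = ∫ ω in A, (μ⟦g ⁻¹' t | m⟧ * (f ⁻¹' s).indicator fun _ => (1 : ℝ)) ω ∂μ := by
        rw [← setIntegral_condExp hm hprod hA]
        exact setIntegral_congr_ae (hm A hA) (hpull.mono fun ω hω _ => hω.symm)
    _ = ∫ ω in A ∩ f ⁻¹' s, (μ⟦g ⁻¹' t | m⟧) ω ∂μ := by
        rw [← setIntegral_indicator hE]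
        congr 1 with ω
        by_cases h : ω ∈ f ⁻¹' s <;> simp [h]

theorem restrict_preimage_apply_eq_withDensity (hfg : CondIndepFun m hm f g μ) (hf : Measurable f)
    (hg : Measurable g) (ht : MeasurableSet t) {A : Set Ω} (hA : MeasurableSet[m] A) {s : Set β}
    (hs : MeasurableSet s) :
    μ.restrict (g ⁻¹' t) (A ∩ f ⁻¹' s) =
      μ.withDensity (fun ω => ENNReal.ofReal ((μ⟦g ⁻¹' t | m⟧) ω)) (A ∩ f ⁻¹' s) := by
  have hAs : MeasurableSet (A ∩ f ⁻¹' s) := (hm A hA).inter (hf hs)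
  rw [Measure.restrict_apply hAs, withDensity_apply _ hAs, ← ofReal_integral_eq_lintegral_ofReal
    integrable_condExp.integrableOn (ae_restrict_of_ae (condExp_indicator_one_nonneg _)),
    ← hfg.measureReal_inter_preimage_inter hf hg ht hA hs, ofReal_measureReal]

theorem trim_restrict_preimage_eq_trim_withDensity (hfg : CondIndepFun m hm f g μ)
    (hf : Measurable f) (hg : Measurable g) (ht : MeasurableSet t) :
    (μ.restrict (g ⁻¹' t)).trim (sup_le hm hf.comap_le) =
      (μ.withDensity fun ω => ENNReal.ofReal ((μ⟦g ⁻¹' t | m⟧) ω)).trim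
        (sup_le hm hf.comap_le) := by
  refine @Measure.ext _ (m ⊔ mβ.comap f) _ _ fun u hu => ?_
  rw [trim_measurableSet_eq _ hu, trim_measurableSet_eq _ hu]
  refine ext_on_measurableSpace_of_generate_finite mΩ _ ?_ (sup_le hm hf.comap_le)
    (MeasurableSpace.sup_eq_generateFrom_image2_inter m (mβ.comap f))
    (MeasurableSpace.isPiSystem_image2_inter (@MeasurableSpace.isPiSystem_measurableSet Ω m)
      (@MeasurableSpace.isPiSystem_measurableSet Ω (mβ.comap f))) ?_ hu
  · rintro - ⟨A, hA, -, ⟨s, hs, rfl⟩, rfl⟩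
    exact hfg.restrict_preimage_apply_eq_withDensity hf hg ht hA hs
  · simpa using
      hfg.restrict_preimage_apply_eq_withDensity hf hg ht MeasurableSet.univ MeasurableSet.univ

theorem setLIntegral_preimage_eq_lintegral_mul (hfg : CondIndepFun m hm f g μ) (hf : Measurable f)
    (hg : Measurable g) (ht : MeasurableSet t) {h : Ω → ℝ≥0∞} (hh : Measurable[m ⊔ mβ.comap f] h) :
    ∫⁻ ω in g ⁻¹' t, h ω ∂μ = ∫⁻ ω, ENNReal.ofReal ((μ⟦g ⁻¹' t | m⟧) ω) * h ω ∂μ := by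
  have hm' : m ⊔ mβ.comap f ≤ mΩ := sup_le hm hf.comap_le
  rw [← lintegral_trim hm' hh, hfg.trim_restrict_preimage_eq_trim_withDensity hf hg ht,
    lintegral_trim hm' hh, lintegral_withDensity_eq_lintegral_mul _
      (stronglyMeasurable_condExp.measurable.mono hm le_rfl).ennreal_ofReal (hh.mono hm' le_rfl)]
  rfl

theorem setIntegral_preimage_eq_integral_mul (hfg : CondIndepFun m hm f g μ) (hf : Measurable f)
    (hg : Measurable g) (ht : MeasurableSet t) {h : Ω → ℝ}
    (hh : StronglyMeasurable[m ⊔ mβ.comap f] h) :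
    ∫ ω in g ⁻¹' t, h ω ∂μ = ∫ ω, (μ⟦g ⁻¹' t | m⟧) ω * h ω ∂μ := by
  have hm' : m ⊔ mβ.comap f ≤ mΩ := sup_le hm hf.comap_le
  rw [integral_trim hm' hh, hfg.trim_restrict_preimage_eq_trim_withDensity hf hg ht,
    ← integral_trim hm' hh, integral_withDensity_eq_integral_toReal_smul
      (stronglyMeasurable_condExp.measurable.mono hm le_rfl).ennreal_ofReal
      (ae_of_all _ fun _ => ENNReal.ofReal_lt_top)]
  refine integral_congr_ae ((condExp_indicator_one_nonneg (m := m) (g ⁻¹' t)).mono fun ω hω => ?_)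
  simp only [ENNReal.toReal_ofReal hω, smul_eq_mul]

variable {Y : Ω → ℝ}

theorem integrable_of_integrableOn_preimage (hYg : CondIndepFun m hm Y g μ) (hY : Measurable Y)
    (hg : Measurable g) (ht : MeasurableSet t) {c : ℝ} (hc : 0 < c)
    (hlow : ∀ᵐ ω ∂μ, c ≤ (μ⟦g ⁻¹' t | m⟧) ω) (hint : IntegrableOn Y (g ⁻¹' t) μ) :
    Integrable Y μ := by
  refine ⟨hY.aestronglyMeasurable, ?_⟩
  have hYm : Measurable[m ⊔ Real.measurableSpace.comap Y] fun ω => ‖Y ω‖ₑ :=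
    measurable_enorm.comp ((comap_measurable Y).mono le_sup_right le_rfl)
  have hle : ENNReal.ofReal c * ∫⁻ ω, ‖Y ω‖ₑ ∂μ ≤ ∫⁻ ω in g ⁻¹' t, ‖Y ω‖ₑ ∂μ := by
    rw [hYg.setLIntegral_preimage_eq_lintegral_mul hY hg ht hYm,
      ← lintegral_const_mul' _ _ ENNReal.ofReal_ne_top]
    exact lintegral_mono_ae (hlow.mono fun ω hω => by gcongr)
  exact ENNReal.lt_top_of_mul_ne_top_right (hle.trans_lt hint.2).ne
    (ENNReal.ofReal_pos.2 hc).ne'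

theorem condExp_indicator_preimage_ae_eq_mul (hYg : CondIndepFun m hm Y g μ) (hY : Measurable Y)
    (hg : Measurable g) (ht : MeasurableSet t) (hYi : Integrable Y μ) :
    μ[(g ⁻¹' t).indicator Y | m] =ᵐ[μ] μ⟦g ⁻¹' t | m⟧ * μ[Y | m] := by
  have hbound : ∀ᵐ ω ∂μ, ‖(μ⟦g ⁻¹' t | m⟧) ω‖ ≤ 1 := by
    refine ae_bdd_abs_condExp_of_ae_bdd_abs (R := (1 : ℝ)) (ae_of_all _ fun ω => ?_)
    by_cases h : ω ∈ g ⁻¹' t <;> simp [h]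
  have hπY : Integrable (μ⟦g ⁻¹' t | m⟧ * Y) μ :=
    hYi.bdd_mul integrable_condExp.aestronglyMeasurable hbound
  have hpull := condExp_mul_of_stronglyMeasurable_left stronglyMeasurable_condExp hπY hYi
  refine (ae_eq_condExp_of_forall_setIntegral_eq hm (hYi.indicator (hg ht))
    (fun A _ _ => (integrable_condExp.bdd_mul integrable_condExp.aestronglyMeasurable
      hbound).integrableOn) (fun A hA _ => ?_)
    (stronglyMeasurable_condExp.mul stronglyMeasurable_condExp).aestronglyMeasurable).symm
  have hAY : StronglyMeasurable[m ⊔ Real.measurableSpace.comap Y] (A.indicator Y) :=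
    ((comap_measurable Y).mono le_sup_right le_rfl).stronglyMeasurable.indicator
      ((le_sup_left : m ≤ m ⊔ Real.measurableSpace.comap Y) A hA)
  calc ∫ ω in A, (μ⟦g ⁻¹' t | m⟧ * μ[Y | m]) ω ∂μ
      = ∫ ω in A, (μ[μ⟦g ⁻¹' t | m⟧ * Y | m]) ω ∂μ :=
        setIntegral_congr_ae (hm A hA) (hpull.mono fun _ h _ => h.symm)
    _ = ∫ ω, (μ⟦g ⁻¹' t | m⟧) ω * A.indicator Y ω ∂μ := by
        rw [setIntegral_condExp hm hπY hA, ← integral_indicator (hm A hA)]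
        congr 1 with ω
        by_cases h : ω ∈ A <;> simp [h]
    _ = ∫ ω in A, (g ⁻¹' t).indicator Y ω ∂μ := by
        rw [← hYg.setIntegral_preimage_eq_integral_mul hY hg ht hAY,
          setIntegral_indicator (hm A hA), setIntegral_indicator (hg ht), inter_comm]

end ProbabilityTheory.CondIndepFun

theorem outcome_regression_identity_general
    {Ω : Type*} [MeasurableSpace Ω] [StandardBorelSpace Ω]
    (μ : Measure Ω) [IsProbabilityMeasure μ]
    {J : ℕ} (D : Ω → Fin (J + 1)) (hD : Measurable D)
    {p : ℕ} (X : Ω → (Fin p → ℝ)) (hX : Measurable X)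
    (Ystar : Fin (J + 1) → Ω → ℝ) (hY : ∀ d, Measurable (Ystar d))
    -- unconfoundedness
    (hUnconf : ∀ d : Fin (J + 1),
      CondIndepFun (MeasurableSpace.comap X inferInstance) hX.comap_le (Ystar d) D μ)
    -- propensity scores
    (π : Fin (J + 1) → Ω → ℝ)
    (hπ : ∀ d : Fin (J + 1), π d =ᵐ[μ]
      μ[(fun ω => if D ω = d then (1 : ℝ) else 0) | MeasurableSpace.comap X inferInstance])
    -- overlap
    (c cbar : ℝ) (hc : 0 < c)
    (hOverlap : ∀ d : Fin (J + 1), ∀ᵐ ω ∂μ, π d ω ∈ Set.Icc c cbar)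
    -- the observed outcome `Y = Y*(D)` is integrable
    (hYint : Integrable (fun ω => Ystar (D ω) ω) μ)
    -- outcome regression functions `g*_d(X)`
    (G : Fin (J + 1) → Ω → ℝ)
    (hG : ∀ d : Fin (J + 1), (fun ω => G d ω * π d ω) =ᵐ[μ]
      μ[(fun ω => (if D ω = d then (1 : ℝ) else 0) * Ystar (D ω) ω) |
        MeasurableSpace.comap X inferInstance]) :
    ∀ d : Fin (J + 1), ∫ ω, Ystar d ω ∂μ = ∫ ω, G d ω ∂μ := by
  intro d
  have hd : MeasurableSet {d} := measurableSet_singleton d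
  have h_treated :
      (fun ω => if D ω = d then (1 : ℝ) else 0) = (D ⁻¹' {d}).indicator fun _ => 1 := by
    ext ω; by_cases h : D ω = d <;> simp [h]
  have h_observed : (fun ω => (if D ω = d then (1 : ℝ) else 0) * Ystar (D ω) ω) =
      (D ⁻¹' {d}).indicator (Ystar d) := by
    ext ω; by_cases h : D ω = d <;> simp [h]
  have hπd : π d =ᵐ[μ] μ⟦D ⁻¹' {d} | MeasurableSpace.comap X inferInstance⟧ := h_treated ▸ hπ d
  have hYd : Integrable (Ystar d) μ :=
    (hUnconf d).integrable_of_integrableOn_preimage (hY d) hD hd hc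
      (by filter_upwards [hOverlap d, hπd] with ω hω hπω using hπω ▸ hω.1)
      (hYint.integrableOn.congr_fun (fun ω (hω : D ω = d) => by simp only [hω]) (hD hd))
  have hGd : G d =ᵐ[μ] μ[Ystar d | MeasurableSpace.comap X inferInstance] := by
    filter_upwards [hG d, (hUnconf d).condExp_indicator_preimage_ae_eq_mul (hY d) hD hd hYd,
      hπd, hOverlap d] with ω hGω hfactor hπω hω
    rw [h_observed, hfactor, Pi.mul_apply, ← hπω] at hGω
    exact mul_right_cancel₀ (hc.trans_le hω.1).ne' (hGω.trans (mul_comm _ _))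
  rw [integral_congr_ae hGd, integral_condExp hX.comap_le]

/-- Under unconfoundedness and overlap, if `Y` is integrable and
`g*_d(X)` is a `σ(X)`-measurable random variable with
`g*_d(X) · π*_d(X) = E[D_d · Y | σ(X)]` a.s. (the outcome regression function), then
`E[Y*(d)] = E[g*_d(X)]` for every `d`. -/
theorem outcome_regression_identity
    {Ω : Type*} [MeasurableSpace Ω] [StandardBorelSpace Ω] [Nonempty Ω]
    (μ : Measure Ω) [IsProbabilityMeasure μ]
    {J : ℕ} (D : Ω → Fin (J + 1)) (hD : Measurable D)
    {p : ℕ} (X : Ω → (Fin p → ℝ)) (hX : Measurable X)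
    (Ystar : Fin (J + 1) → Ω → ℝ) (hY : ∀ d, Measurable (Ystar d))
    -- unconfoundedness
    (hUnconf : ∀ d : Fin (J + 1),
      CondIndepFun (MeasurableSpace.comap X inferInstance) hX.comap_le (Ystar d) D μ)
    -- propensity scores
    (π : Fin (J + 1) → Ω → ℝ)
    (hπmeas : ∀ d, Measurable[MeasurableSpace.comap X inferInstance] (π d))
    (hπ : ∀ d : Fin (J + 1), π d =ᵐ[μ]
      μ[(fun ω => if D ω = d then (1 : ℝ) else 0) | MeasurableSpace.comap X inferInstance])
    -- overlap
    (c cbar : ℝ) (hc : 0 < c) (hcbar : cbar < 1)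
    (hOverlap : ∀ d : Fin (J + 1), ∀ᵐ ω ∂μ, π d ω ∈ Set.Icc c cbar)
    -- the observed outcome `Y = Y*(D)` is integrable
    (hYint : Integrable (fun ω => Ystar (D ω) ω) μ)
    -- outcome regression functions `g*_d(X)`
    (G : Fin (J + 1) → Ω → ℝ)
    (hGmeas : ∀ d, Measurable[MeasurableSpace.comap X inferInstance] (G d))
    (hG : ∀ d : Fin (J + 1), (fun ω => G d ω * π d ω) =ᵐ[μ]
      μ[(fun ω => (if D ω = d then (1 : ℝ) else 0) * Ystar (D ω) ω) |
        MeasurableSpace.comap X inferInstance]) :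
    ∀ d : Fin (J + 1), ∫ ω, Ystar d ω ∂μ = ∫ ω, G d ω ∂μ :=
  outcome_regression_identity_general μ D hD X hX Ystar hY hUnconf π hπ c cbar hc hOverlap hYint G
    hG
end

section
/- Suppose the unconfoundedness assumption and the overlap assumption hold. Fix d, d' ∈ {0,1,...,J} with p_{d'} := P(D = d') > 0, fix β ∈ ℝ, and suppose L(Y*(d) − β) is integrable. Then E[ L(Y*(d) − β) | D = d' ] = (1/p_{d'}) · E[ D_d · (π*_{d'}(X)/π*_d(X)) · L(Y − β) ]. Consequently, the treated-subgroup parameter vector β*_{d'} := argmin_β Σ_{d=0}^{J} E[L(Y*(d) − β_d) | D = d'] coincides with the minimizer of Σ_{d=0}^{J} (1/p_{d'}) E[ D_d (π*_{d'}(X)/π*_d(X)) L(Y − β_d) ]. -/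
open MeasureTheory ProbabilityTheory

/-!
Write `h = L(Y*(d) - β)` and `m = σ(X)`. Conditional independence of `h` and `D` given `m` yields
`E[1{D = e} h | m] = π_e E[h | m]` for every treatment `e`. With `e = d'` this gives
`p_{d'} E[h | D = d'] = E[π_{d'} E[h | m]]`; with `e = d`, after multiplying by the bounded
`m`-measurable weight `π_{d'} / π_d`, it gives the same expression for the weighted integral.

The factorisation is checked on each `m`-measurable set `s`: the laws of `h` under `μ` restricted
to `s ∩ {D = e}` and under `π_e • μ` restricted to `s` agree, because conditional independence
makes them agree on every set `h⁻¹' t`.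
-/

namespace MeasureTheory

variable {Ω : Type*} {m mΩ : MeasurableSpace Ω} {μ : Measure Ω}

lemma ae_abs_condExp_indicator_le_one (A : Set Ω) : ∀ᵐ ω ∂μ, |(μ⟦A | m⟧) ω| ≤ 1 :=
  ae_bdd_abs_condExp_of_ae_bdd_abs <| .of_forall fun ω => by
    by_cases hω : ω ∈ A <;> simp [hω]

lemma condExp_indicator_nonneg (A : Set Ω) : 0 ≤ᵐ[μ] μ⟦A | m⟧ :=
  condExp_nonneg <| .of_forall <| Set.indicator_nonneg fun _ _ => zero_le_one

lemma setIntegral_mul_condExp (hm : m ≤ mΩ) [SigmaFinite (μ.trim hm)] {f g : Ω → ℝ} {C : ℝ}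
    {s : Set Ω} (hs : MeasurableSet[m] s) (hg : StronglyMeasurable[m] g) (hgC : ∀ᵐ ω ∂μ, ‖g ω‖ ≤ C)
    (hf : Integrable f μ) :
    ∫ ω in s, g ω * μ[f | m] ω ∂μ = ∫ ω in s, g ω * f ω ∂μ := by
  have hgf : Integrable (fun ω => g ω * f ω) μ :=
    hf.bdd_mul (hg.mono hm).aestronglyMeasurable hgC
  rw [← setIntegral_condExp hm hgf hs]
  refine setIntegral_congr_ae (hm s hs) ?_
  filter_upwards [condExp_mul_of_stronglyMeasurable_left hg hgf hf] with ω hω _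
  exact hω.symm

lemma measure_inter_eq_ofReal_setIntegral_condExp (hm : m ≤ mΩ) [IsFiniteMeasure μ]
    {A B s : Set Ω} (hA : MeasurableSet A) (hB : MeasurableSet B) (hs : MeasurableSet[m] s)
    (hBA : μ⟦B ∩ A | m⟧ =ᵐ[μ] fun ω => (μ⟦B | m⟧) ω * (μ⟦A | m⟧) ω) :
    μ (B ∩ (s ∩ A)) = ENNReal.ofReal (∫ ω in B ∩ s, (μ⟦A | m⟧) ω ∂μ) := by
  have : IsFiniteMeasure (μ.trim hm) := isFiniteMeasure_trim hm
  have hreal : μ.real (B ∩ A ∩ s) = ∫ ω in B ∩ s, (μ⟦A | m⟧) ω ∂μ := calc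
    μ.real (B ∩ A ∩ s) = ∫ ω in s, (μ⟦B ∩ A | m⟧) ω ∂μ := by
      rw [setIntegral_condExp hm ((integrable_const 1).indicator (hB.inter hA)) hs,
        integral_indicator (hB.inter hA), Measure.restrict_restrict (hB.inter hA),
        setIntegral_const, smul_eq_mul, mul_one]
    _ = ∫ ω in s, (μ⟦A | m⟧) ω * (μ⟦B | m⟧) ω ∂μ := by
      refine setIntegral_congr_ae (hm s hs) ?_
      filter_upwards [hBA] with ω hω _
      rw [hω, mul_comm]
    _ = ∫ ω in s, (μ⟦A | m⟧) ω * B.indicator (fun _ => 1) ω ∂μ :=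
      setIntegral_mul_condExp hm hs stronglyMeasurable_condExp
        (by simpa using ae_abs_condExp_indicator_le_one A) ((integrable_const 1).indicator hB)
    _ = ∫ ω in B ∩ s, (μ⟦A | m⟧) ω ∂μ := by
      simp only [← Set.indicator_mul_right, mul_one]
      rw [integral_indicator hB, Measure.restrict_restrict hB]
  rw [← hreal, ofReal_measureReal]
  congr 1
  ac_rfl

end MeasureTheory

namespace ProbabilityTheory

lemma integral_cond_eq_inv_mul_integral_indicator {Ω : Type*} [MeasurableSpace Ω] {μ : Measure Ω}
    {A : Set Ω} (hA : MeasurableSet A) (f : Ω → ℝ) :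
    ∫ ω, f ω ∂μ[|A] = (μ.real A)⁻¹ * ∫ ω, A.indicator f ω ∂μ := by
  rw [cond, integral_smul_measure, integral_indicator hA, ENNReal.toReal_inv, smul_eq_mul]
  rfl

variable {Ω β γ : Type*} {m mΩ : MeasurableSpace Ω} [StandardBorelSpace Ω] {hm : m ≤ mΩ}
  {μ : Measure Ω} [IsFiniteMeasure μ] [MeasurableSpace β] [MeasurableSpace γ]
  {g : Ω → γ} {s : Set Ω}

lemma CondIndepFun.map_restrict_inter_preimage_eq_map_withDensity {f : Ω → β} {T : Set γ}
    (hfg : CondIndepFun m hm f g μ) (hf : Measurable f) (hg : Measurable g) (hT : MeasurableSet T)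
    (hs : MeasurableSet[m] s) :
    (μ.restrict (s ∩ g ⁻¹' T)).map f
      = ((μ.restrict s).withDensity fun ω => ENNReal.ofReal ((μ⟦g ⁻¹' T | m⟧) ω)).map f := by
  have hfactor := (condIndepFun_iff_condExp_inter_preimage_eq_mul hf hg).mp hfg
  ext t ht
  rw [Measure.map_apply hf ht, Measure.map_apply hf ht, Measure.restrict_apply (hf ht),
    withDensity_apply _ (hf ht), Measure.restrict_restrict (hf ht),
    measure_inter_eq_ofReal_setIntegral_condExp hm (hg hT) (hf ht) hs (hfactor t T ht hT),
    ofReal_integral_eq_lintegral_ofReal integrable_condExp.integrableOn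
      (ae_restrict_of_ae (condExp_indicator_nonneg _))]

lemma CondIndepFun.setIntegral_indicator_preimage_eq_mul {f : Ω → ℝ} {T : Set γ}
    (hfg : CondIndepFun m hm f g μ) (hf : Measurable f) (hg : Measurable g) (hT : MeasurableSet T)
    (hs : MeasurableSet[m] s) :
    ∫ ω in s, (g ⁻¹' T).indicator f ω ∂μ = ∫ ω in s, (μ⟦g ⁻¹' T | m⟧) ω * f ω ∂μ := by
  set q := μ⟦g ⁻¹' T | m⟧
  have hq : Measurable q := (stronglyMeasurable_condExp.mono hm).measurable
  calc ∫ ω in s, (g ⁻¹' T).indicator f ω ∂μ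
      = ∫ ω in s ∩ g ⁻¹' T, f ω ∂μ := by
        rw [integral_indicator (hg hT), Measure.restrict_restrict (hg hT), Set.inter_comm]
    _ = ∫ x, x ∂((μ.restrict (s ∩ g ⁻¹' T)).map f) :=
        (integral_map hf.aemeasurable aestronglyMeasurable_id).symm
    _ = ∫ x, x ∂(((μ.restrict s).withDensity fun ω => ENNReal.ofReal (q ω)).map f) := by
        rw [hfg.map_restrict_inter_preimage_eq_map_withDensity hf hg hT hs]
    _ = ∫ ω in s, (q ω).toNNReal • f ω ∂μ :=
        (integral_map hf.aemeasurable aestronglyMeasurable_id).trans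
          (integral_withDensity_eq_integral_smul hq.real_toNNReal f)
    _ = ∫ ω in s, q ω * f ω ∂μ := by
        refine setIntegral_congr_ae (hm s hs) ?_
        filter_upwards [condExp_indicator_nonneg (μ := μ) (m := m) (g ⁻¹' T)] with ω hω _
        rw [NNReal.smul_def, Real.coe_toNNReal _ hω, smul_eq_mul]

lemma CondIndepFun.condExp_indicator_preimage_eq_mul {f : Ω → ℝ} {T : Set γ}
    (hfg : CondIndepFun m hm f g μ) (hf : Measurable f) (hfi : Integrable f μ)
    (hg : Measurable g) (hT : MeasurableSet T) :
    μ[(g ⁻¹' T).indicator f | m] =ᵐ[μ] fun ω => (μ⟦g ⁻¹' T | m⟧) ω * (μ[f | m]) ω := by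
  have : IsFiniteMeasure (μ.trim hm) := isFiniteMeasure_trim hm
  have hq_le := ae_abs_condExp_indicator_le_one (μ := μ) (m := m) (g ⁻¹' T)
  refine (ae_eq_condExp_of_forall_setIntegral_eq hm (hfi.indicator (hg hT))
    (fun s _ _ => ?_) (fun s hs _ => ?_) ?_).symm
  · exact (integrable_condExp.bdd_mul (stronglyMeasurable_condExp.mono hm).aestronglyMeasurable
      hq_le).integrableOn
  · rw [setIntegral_mul_condExp hm hs stronglyMeasurable_condExp hq_le hfi,
      hfg.setIntegral_indicator_preimage_eq_mul hf hg hT hs]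
  · exact (stronglyMeasurable_condExp.mul stronglyMeasurable_condExp).aestronglyMeasurable

lemma CondIndepFun.integral_cond_eq_inverse_propensity_weighted {ι : Type*} [MeasurableSpace ι]
    [MeasurableSingletonClass ι] {f : Ω → ℝ} {D : Ω → ι} (hfD : CondIndepFun m hm f D μ)
    (hf : Measurable f) (hfi : Integrable f μ) (hD : Measurable D) {π : ι → Ω → ℝ}
    (hπm : ∀ e, Measurable[m] (π e)) (hπ : ∀ e, π e =ᵐ[μ] μ⟦D ⁻¹' {e} | m⟧)
    {c : ℝ} (hc : 0 < c) (d d' : ι) (hcπ : ∀ᵐ ω ∂μ, c ≤ π d ω) :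
    ∫ ω, f ω ∂μ[|D ⁻¹' {d'}]
      = (μ.real (D ⁻¹' {d'}))⁻¹ * ∫ ω, π d' ω / π d ω * (D ⁻¹' {d}).indicator f ω ∂μ := by
  have : IsFiniteMeasure (μ.trim hm) := isFiniteMeasure_trim hm
  have hfactor e := hfD.condExp_indicator_preimage_eq_mul hf hfi hD (measurableSet_singleton e)
  have hweight_bdd : ∀ᵐ ω ∂μ, ‖π d' ω / π d ω‖ ≤ 1 / c := by
    filter_upwards [hπ d', ae_abs_condExp_indicator_le_one (D ⁻¹' {d'}), hcπ] with ω hd' hle hd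
    rw [Real.norm_eq_abs, abs_div, abs_of_pos (hc.trans_le hd), hd']
    exact div_le_div₀ zero_le_one hle hc hd
  rw [integral_cond_eq_inv_mul_integral_indicator (hD (measurableSet_singleton d'))]
  congr 1
  calc ∫ ω, (D ⁻¹' {d'}).indicator f ω ∂μ
      = ∫ ω, (μ[(D ⁻¹' {d'}).indicator f | m]) ω ∂μ := (integral_condExp hm).symm
    _ = ∫ ω, π d' ω / π d ω * (μ[(D ⁻¹' {d}).indicator f | m]) ω ∂μ := by
        refine integral_congr_ae ?_
        filter_upwards [hfactor d', hfactor d, hπ d', hπ d, hcπ] with ω hd'f hdf hd' hd hcd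
        rw [hd'f, hdf, ← hd', ← hd]
        field_simp [(hc.trans_le hcd).ne']
    _ = ∫ ω, π d' ω / π d ω * (D ⁻¹' {d}).indicator f ω ∂μ := by
        simpa using setIntegral_mul_condExp hm MeasurableSet.univ
          ((hπm d').div (hπm d)).stronglyMeasurable hweight_bdd
          (hfi.indicator (hD (measurableSet_singleton d)))

end ProbabilityTheory

theorem treated_subgroup_identity_general
    {Ω : Type*} [MeasurableSpace Ω] [StandardBorelSpace Ω]
    (μ : Measure Ω) [IsProbabilityMeasure μ]
    {J : ℕ} (D : Ω → Fin (J + 1)) (hD : Measurable D)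
    {p : ℕ} (X : Ω → (Fin p → ℝ)) (hX : Measurable X)
    (Ystar : Fin (J + 1) → Ω → ℝ) (hY : ∀ d, Measurable (Ystar d))
    -- unconfoundedness
    (hUnconf : ∀ d : Fin (J + 1),
      CondIndepFun (MeasurableSpace.comap X inferInstance) hX.comap_le (Ystar d) D μ)
    -- propensity scores
    (π : Fin (J + 1) → Ω → ℝ)
    (hπmeas : ∀ d, Measurable[MeasurableSpace.comap X inferInstance] (π d))
    (hπ : ∀ d : Fin (J + 1), π d =ᵐ[μ]
      μ[(fun ω => if D ω = d then (1 : ℝ) else 0) | MeasurableSpace.comap X inferInstance])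
    -- overlap
    (c cbar : ℝ) (hc : 0 < c)
    (hOverlap : ∀ d : Fin (J + 1), ∀ᵐ ω ∂μ, π d ω ∈ Set.Icc c cbar)
    -- convex loss, integrable at every parameter value
    (L : ℝ → ℝ) (hL : ConvexOn ℝ Set.univ L)
    (hint : ∀ (d : Fin (J + 1)) (β : ℝ), Integrable (fun ω => L (Ystar d ω - β)) μ)
    -- the treated subgroup `d'` has positive probability `p_{d'}`
    (d' : Fin (J + 1)) (pd' : ℝ)
    (hpd'' : (μ {ω | D ω = d'}).toReal = pd') :
    (∀ (d : Fin (J + 1)) (β : ℝ),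
        ∫ ω, L (Ystar d ω - β) ∂(μ[|{ω | D ω = d'}])
          = (1 / pd') *
            ∫ ω, (if D ω = d then (1 : ℝ) else 0) * (π d' ω / π d ω)
              * L (Ystar (D ω) ω - β) ∂μ) ∧
    (∀ βstar : Fin (J + 1) → ℝ,
      (∀ b : Fin (J + 1) → ℝ,
          ∑ d : Fin (J + 1), ∫ ω, L (Ystar d ω - βstar d) ∂(μ[|{ω | D ω = d'}])
            ≤ ∑ d : Fin (J + 1), ∫ ω, L (Ystar d ω - b d) ∂(μ[|{ω | D ω = d'}]))
        ↔ (∀ b : Fin (J + 1) → ℝ,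
          ∑ d : Fin (J + 1), (1 / pd') *
              ∫ ω, (if D ω = d then (1 : ℝ) else 0) * (π d' ω / π d ω)
                * L (Ystar (D ω) ω - βstar d) ∂μ
            ≤ ∑ d : Fin (J + 1), (1 / pd') *
              ∫ ω, (if D ω = d then (1 : ℝ) else 0) * (π d' ω / π d ω)
                * L (Ystar (D ω) ω - b d) ∂μ)) := by
  have hLm : Measurable L := (continuousOn_univ.mp (hL.continuousOn isOpen_univ)).measurable
  have hπD : ∀ e, π e =ᵐ[μ] μ⟦D ⁻¹' {e} | MeasurableSpace.comap X inferInstance⟧ := fun e => by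
    have hind : (fun ω => if D ω = e then (1 : ℝ) else 0) = (D ⁻¹' {e}).indicator fun _ => 1 := by
      funext ω
      by_cases hω : D ω = e <;> simp [hω]
    exact hind ▸ hπ e
  have hpd : μ.real (D ⁻¹' {d'}) = pd' := hpd''
  have ipw : ∀ (d : Fin (J + 1)) (β : ℝ),
      ∫ ω, L (Ystar d ω - β) ∂(μ[|{ω | D ω = d'}])
        = (1 / pd') * ∫ ω, (if D ω = d then (1 : ℝ) else 0) * (π d' ω / π d ω)
            * L (Ystar (D ω) ω - β) ∂μ := by
    intro d β
    have hf : Measurable fun y => L (y - β) := hLm.comp (measurable_id.sub_const β)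
    have hfD : CondIndepFun _ hX.comap_le (fun ω => L (Ystar d ω - β)) D μ :=
      (hUnconf d).comp hf measurable_id
    rw [show {ω | D ω = d'} = D ⁻¹' {d'} from rfl,
      hfD.integral_cond_eq_inverse_propensity_weighted (hf.comp (hY d)) (hint d β) hD hπmeas hπD
        hc d d' ((hOverlap d).mono fun _ h => h.1), hpd, one_div]
    congr 1
    refine integral_congr_ae (.of_forall fun ω => ?_)
    by_cases hω : D ω = d <;> simp [hω, mul_comm]
  refine ⟨ipw, fun βstar => ?_⟩
  simp only [← ipw]

/-- Under unconfoundedness and overlap, with `p_{d'} = P(D = d') > 0`,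
for every `d` and `β` (with `L(Y*(d) − β)` integrable),
`E[L(Y*(d) − β) | D = d'] = (1/p_{d'}) E[ D_d (π*_{d'}(X)/π*_d(X)) L(Y − β) ]`;
consequently the treated-subgroup objective `Σ_d E[L(Y*(d) − β_d) | D = d']` coincides with
`Σ_d (1/p_{d'}) E[ D_d (π*_{d'}(X)/π*_d(X)) L(Y − β_d) ]`, so the two minimization problems
have the same minimizers. -/
theorem treated_subgroup_identity
    {Ω : Type*} [MeasurableSpace Ω] [StandardBorelSpace Ω] [Nonempty Ω]
    (μ : Measure Ω) [IsProbabilityMeasure μ]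
    {J : ℕ} (D : Ω → Fin (J + 1)) (hD : Measurable D)
    {p : ℕ} (X : Ω → (Fin p → ℝ)) (hX : Measurable X)
    (Ystar : Fin (J + 1) → Ω → ℝ) (hY : ∀ d, Measurable (Ystar d))
    -- unconfoundedness
    (hUnconf : ∀ d : Fin (J + 1),
      CondIndepFun (MeasurableSpace.comap X inferInstance) hX.comap_le (Ystar d) D μ)
    -- propensity scores
    (π : Fin (J + 1) → Ω → ℝ)
    (hπmeas : ∀ d, Measurable[MeasurableSpace.comap X inferInstance] (π d))
    (hπ : ∀ d : Fin (J + 1), π d =ᵐ[μ]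
      μ[(fun ω => if D ω = d then (1 : ℝ) else 0) | MeasurableSpace.comap X inferInstance])
    -- overlap
    (c cbar : ℝ) (hc : 0 < c) (hcbar : cbar < 1)
    (hOverlap : ∀ d : Fin (J + 1), ∀ᵐ ω ∂μ, π d ω ∈ Set.Icc c cbar)
    -- convex loss, integrable at every parameter value
    (L : ℝ → ℝ) (hL : ConvexOn ℝ Set.univ L)
    (hint : ∀ (d : Fin (J + 1)) (β : ℝ), Integrable (fun ω => L (Ystar d ω - β)) μ)
    -- the treated subgroup `d'` has positive probability `p_{d'}`
    (d' : Fin (J + 1)) (pd' : ℝ) (hpd' : 0 < pd')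
    (hpd'' : (μ {ω | D ω = d'}).toReal = pd') :
    (∀ (d : Fin (J + 1)) (β : ℝ),
        ∫ ω, L (Ystar d ω - β) ∂(μ[|{ω | D ω = d'}])
          = (1 / pd') *
            ∫ ω, (if D ω = d then (1 : ℝ) else 0) * (π d' ω / π d ω)
              * L (Ystar (D ω) ω - β) ∂μ) ∧
    (∀ βstar : Fin (J + 1) → ℝ,
      (∀ b : Fin (J + 1) → ℝ,
          ∑ d : Fin (J + 1), ∫ ω, L (Ystar d ω - βstar d) ∂(μ[|{ω | D ω = d'}])
            ≤ ∑ d : Fin (J + 1), ∫ ω, L (Ystar d ω - b d) ∂(μ[|{ω | D ω = d'}]))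
        ↔ (∀ b : Fin (J + 1) → ℝ,
          ∑ d : Fin (J + 1), (1 / pd') *
              ∫ ω, (if D ω = d then (1 : ℝ) else 0) * (π d' ω / π d ω)
                * L (Ystar (D ω) ω - βstar d) ∂μ
            ≤ ∑ d : Fin (J + 1), (1 / pd') *
              ∫ ω, (if D ω = d then (1 : ℝ) else 0) * (π d' ω / π d ω)
                * L (Ystar (D ω) ω - b d) ∂μ)) :=
  treated_subgroup_identity_general μ D hD X hX Ystar hY hUnconf π hπmeas hπ c cbar hc hOverlap L hL
    hint d' pd' hpd''
end

section
/- Let α ∈ (0,1] and let (p_n)_{n≥3} be a sequence of positive real numbers with p_n → ∞ such that p_n ≤ C · α · log n / log log n for all sufficiently large n, for some constant 0 < C < 1/2. Then n^{−(α/(p_n+1))/(4(1+α/(p_n+1)))} · (log n)^{1/2 + (α/(p_n+1))/(2(1+α/(p_n+1)))} → 0 as n → ∞. Equivalently, (n/(log n)²)^{−(1 + 2α/(p_n+1))/(4(1 + α/(p_n+1)))} = o(n^{−1/4}), so the L²-convergence rate of the neural-network sieve estimator is of order o(n^{−1/4}) under this growth restriction on the covariate dimension. -/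
/-!
Put `e = (α/(p+1)) / (4(1 + α/(p+1))) = α / (4(p + 1 + α))`. Both claims come down to
`n^{-e} (log n)^{1/2 + 2e} = exp (log log n / 2 - e (log n - 2 log log n)) → 0`, the second
because `(n/(log n)²)^{-(1/4 + e)} = n^{-e} (log n)^{1/2 + 2e} · n^{-1/4}`.
Pick `2 < κ < 1/C`. Since `p log log n ≤ C α log n` and `log log n = o(log n)`, eventually
`κ (p + 1 + α) log log n ≤ α (log n - 2 log log n)`, i.e.
`e (log n - 2 log log n) ≥ (κ/4) log log n`, so the exponent is at most
`(1/2 - κ/4) log log n → -∞`.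
-/

open Filter Asymptotics Real

lemma div_div_four_mul_one_add_div_eq {α p : ℝ} (hp : 0 < p + 1) (hα : 0 < α) :
    α / (p + 1) / (4 * (1 + α / (p + 1))) = α / (4 * (p + 1 + α)) := by
  field_simp

lemma div_div_two_mul_one_add_div_eq {α p : ℝ} (hp : 0 < p + 1) (hα : 0 < α) :
    α / (p + 1) / (2 * (1 + α / (p + 1))) = 2 * (α / (4 * (p + 1 + α))) := by
  field_simp
  ring

lemma one_add_two_mul_div_div_four_mul_eq {α p : ℝ} (hp : 0 < p + 1) (hα : 0 < α) :
    (1 + 2 * α / (p + 1)) / (4 * (1 + α / (p + 1))) = 1 / 4 + α / (4 * (p + 1 + α)) := by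
  field_simp
  ring

lemma rpow_neg_mul_log_rpow_eq_exp {x : ℝ} (hx : 1 < x) (e : ℝ) :
    x ^ (-e) * log x ^ (1 / 2 + 2 * e) =
      exp (log (log x) / 2 - e * (log x - 2 * log (log x))) := by
  rw [rpow_def_of_pos (by linarith), rpow_def_of_pos (log_pos hx), ← exp_add]
  ring_nf

lemma div_log_sq_rpow_eq {x : ℝ} (hx : 1 < x) (e : ℝ) :
    (x / log x ^ 2) ^ (-(1 / 4 + e)) =
      x ^ (-e) * log x ^ (1 / 2 + 2 * e) * x ^ (-(1 / 4 : ℝ)) := by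
  have hx0 : 0 < x := by linarith
  have hlog : 0 < log x := log_pos hx
  rw [rpow_def_of_pos (by positivity), rpow_def_of_pos hx0, rpow_def_of_pos hlog,
    rpow_def_of_pos hx0, ← exp_add, ← exp_add, log_div hx0.ne' (by positivity), log_pow]
  push_cast
  ring_nf

lemma tendsto_log_natCast_atTop : Tendsto (fun n : ℕ => log n) atTop atTop :=
  tendsto_log_atTop.comp tendsto_natCast_atTop_atTop

lemma tendsto_log_log_natCast_atTop : Tendsto (fun n : ℕ => log (log n)) atTop atTop :=
  tendsto_log_atTop.comp tendsto_log_natCast_atTop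

lemma eventually_mul_log_log_le {α C κ : ℝ} {p : ℕ → ℝ} (hα : 0 < α) (hκ : 0 ≤ κ)
    (hκC : κ * C < 1)
    (hbound : ∀ᶠ n : ℕ in atTop, p n ≤ C * α * log n / log (log n)) :
    ∀ᶠ n : ℕ in atTop,
      κ * (p n + 1 + α) * log (log n) ≤ α * (log n - 2 * log (log n)) := by
  have hlittle : (fun n : ℕ => log (log n)) =o[atTop] fun n : ℕ => log n :=
    isLittleO_log_id_atTop.comp_tendsto tendsto_log_natCast_atTop
  -- `log log n ≤ ε log n` for this `ε` is `(κ(1+α) + 2α) log log n ≤ α(1 - κC) log n`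
  have hε : 0 < α * (1 - κ * C) / (κ * (1 + α) + 2 * α) := by
    apply div_pos <;> nlinarith
  filter_upwards [hbound, hlittle.bound hε, tendsto_log_natCast_atTop.eventually_gt_atTop 0,
    tendsto_log_log_natCast_atTop.eventually_gt_atTop 0] with n hpn hsmall hlog hpos
  rw [norm_of_nonneg hpos.le, norm_of_nonneg hlog.le, div_mul_eq_mul_div,
    le_div_iff₀ (by positivity)] at hsmall
  have hp : p n * log (log n) ≤ C * α * log n := (le_div_iff₀ hpos).1 hpn
  nlinarith [mul_le_mul_of_nonneg_left hp hκ]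

lemma tendsto_half_log_log_sub_mul_atBot {α C κ : ℝ} {p : ℕ → ℝ} (hα : 0 < α)
    (hp : ∀ n, 0 < p n) (h2κ : 2 < κ) (hκC : κ * C < 1)
    (hbound : ∀ᶠ n : ℕ in atTop, p n ≤ C * α * log n / log (log n)) :
    Tendsto (fun n : ℕ => log (log n) / 2 - α / (4 * (p n + 1 + α)) * (log n - 2 * log (log n)))
      atTop atBot := by
  refine tendsto_atBot_mono' _ ?_ (tendsto_neg_atTop_atBot.comp
    (tendsto_log_log_natCast_atTop.const_mul_atTop (by linarith : 0 < κ / 4 - 1 / 2)))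
  filter_upwards [eventually_mul_log_log_le hα (by linarith) hκC hbound] with n hn
  have hden : 0 < 4 * (p n + 1 + α) := by linarith [hp n]
  have : κ / 4 * log (log n) ≤ α / (4 * (p n + 1 + α)) * (log n - 2 * log (log n)) := by
    rw [div_mul_eq_mul_div α, le_div_iff₀ hden]
    linarith
  simp only [Function.comp_apply]
  linarith

theorem dimension_growth_rate_general
    (α : ℝ) (hα0 : 0 < α)
    (p : ℕ → ℝ) (hp_pos : ∀ n, 0 < p n)
    (C : ℝ) (hC0 : 0 < C) (hC : C < 1 / 2)
    (hbound : ∀ᶠ n : ℕ in atTop, p n ≤ C * α * Real.log n / Real.log (Real.log n)) :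
    Tendsto (fun n : ℕ =>
        (n : ℝ) ^ (-((α / (p n + 1)) / (4 * (1 + α / (p n + 1)))))
          * Real.log n ^ ((1 : ℝ) / 2 + (α / (p n + 1)) / (2 * (1 + α / (p n + 1)))))
      atTop (nhds 0) ∧
    (fun n : ℕ => ((n : ℝ) / Real.log n ^ 2) ^
        (-((1 + 2 * α / (p n + 1)) / (4 * (1 + α / (p n + 1))))))
      =o[atTop] fun n : ℕ => (n : ℝ) ^ (-(1 / 4 : ℝ)) := by
  set e : ℕ → ℝ := fun n => α / (4 * (p n + 1 + α))
  have hp1 : ∀ n, 0 < p n + 1 := fun n => by linarith [hp_pos n]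
  obtain ⟨κ, h2κ, hκC⟩ : ∃ κ, 2 < κ ∧ κ < 1 / C :=
    exists_between (by rw [lt_div_iff₀ hC0]; linarith)
  have hκC' : κ * C < 1 := (lt_div_iff₀ hC0).1 hκC
  have hlim :
      Tendsto (fun n : ℕ => (n : ℝ) ^ (-e n) * log n ^ (1 / 2 + 2 * e n)) atTop (nhds 0) := by
    refine (tendsto_exp_atBot.comp
      (tendsto_half_log_log_sub_mul_atBot hα0 hp_pos h2κ hκC' hbound)).congr' ?_
    filter_upwards [eventually_gt_atTop 1] with n hn
    exact (rpow_neg_mul_log_rpow_eq_exp (by exact_mod_cast hn) _).symm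
  refine ⟨hlim.congr fun n => ?_, ?_⟩
  · rw [div_div_four_mul_one_add_div_eq (hp1 n) hα0, div_div_two_mul_one_add_div_eq (hp1 n) hα0]
  · have hrate := (((isLittleO_one_iff ℝ).2 hlim).mul_isBigO
      (isBigO_refl (fun n : ℕ => (n : ℝ) ^ (-(1 / 4 : ℝ))) atTop)).congr_right
        fun n => one_mul _
    refine hrate.congr' ?_ EventuallyEq.rfl
    filter_upwards [eventually_gt_atTop 1] with n hn
    rw [one_add_two_mul_div_div_four_mul_eq (hp1 n) hα0,
      div_log_sq_rpow_eq (by exact_mod_cast hn)]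

/-- If the covariate dimension `p_n → ∞` satisfies
`p_n ≤ C·α·log n / log log n` eventually, for some `0 < C < 1/2`, then
`n^{−(α/(p_n+1))/(4(1+α/(p_n+1)))} (log n)^{1/2 + (α/(p_n+1))/(2(1+α/(p_n+1)))} → 0`;
equivalently, `(n/(log n)²)^{−(1+2α/(p_n+1))/(4(1+α/(p_n+1)))} = o(n^{−1/4})`. -/
theorem dimension_growth_rate
    (α : ℝ) (hα0 : 0 < α) (hα1 : α ≤ 1)
    (p : ℕ → ℝ) (hp_pos : ∀ n, 0 < p n)
    (hp_top : Tendsto p atTop atTop)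
    (C : ℝ) (hC0 : 0 < C) (hC : C < 1 / 2)
    (hbound : ∀ᶠ n : ℕ in atTop, p n ≤ C * α * Real.log n / Real.log (Real.log n)) :
    Tendsto (fun n : ℕ =>
        (n : ℝ) ^ (-((α / (p n + 1)) / (4 * (1 + α / (p n + 1)))))
          * Real.log n ^ ((1 : ℝ) / 2 + (α / (p n + 1)) / (2 * (1 + α / (p n + 1)))))
      atTop (nhds 0) ∧
    (fun n : ℕ => ((n : ℝ) / Real.log n ^ 2) ^
        (-((1 + 2 * α / (p n + 1)) / (4 * (1 + α / (p n + 1))))))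
      =o[atTop] fun n : ℕ => (n : ℝ) ^ (-(1 / 4 : ℝ)) :=
  dimension_growth_rate_general α hα0 p hp_pos C hC0 hC hbound
end
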